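/- For any symmetric n×n matrix Γ over F_3 (in particular the adjacency matrix of a 3-weighted graph), the rows of Γ + ω·I, where ω is a primitive element of F_9, generate an F_3-linear code C ⊆ F_9^n of size 3^n that is self-orthogonal with respect to the Hermitian trace inner product ⟨x,y⟩ = ω²(x·ȳ − x̄·y); hence C is self-dual. -/

import Mathlib

/-- The Hermitian trace inner product `⟨x,y⟩ = ω²(x·ȳ − x̄·y)` on `F₉ⁿ`. -/
noncomputable def traceIP {n : ℕ} (ω : GaloisField 3 2)
    (x y : Fin n → GaloisField 3 2) : GaloisField 3 2 :=
  ω ^ 2 * ((∑ i, x i * y i ^ 3) - ∑ i, x i ^ 3 * y i)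

private lemma K_pow9 (x : GaloisField 3 2) : x ^ 9 = x := by
  letI : Fintype (GaloisField 3 2) := Fintype.ofFinite _
  have h := FiniteField.pow_card x
  have hc : Fintype.card (GaloisField 3 2) = 9 := by
    rw [← Nat.card_eq_fintype_card, GaloisField.card (p := 3) (n := 2) (by norm_num)]
    norm_num
  rwa [hc] at h

private lemma K_cube_add (x y : GaloisField 3 2) : (x + y) ^ 3 = x ^ 3 + y ^ 3 :=
  add_pow_char x y 3

private lemma K_cube_sub (x y : GaloisField 3 2) : (x - y) ^ 3 = x ^ 3 - y ^ 3 :=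
  sub_pow_char x y

private lemma K_cube_alg (c : ZMod 3) :
    (algebraMap (ZMod 3) (GaloisField 3 2) c) ^ 3 = algebraMap (ZMod 3) (GaloisField 3 2) c := by
  rw [← map_pow, ZMod.pow_card]

private lemma traceIP_add_left {n : ℕ} (ω : GaloisField 3 2)
    (x x' y : Fin n → GaloisField 3 2) :
    traceIP ω (x + x') y = traceIP ω x y + traceIP ω x' y := by
  simp only [traceIP, Pi.add_apply, K_cube_add, add_mul]
  rw [Finset.sum_add_distrib, Finset.sum_add_distrib]
  ring

private lemma traceIP_add_right {n : ℕ} (ω : GaloisField 3 2)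
    (x y y' : Fin n → GaloisField 3 2) :
    traceIP ω x (y + y') = traceIP ω x y + traceIP ω x y' := by
  simp only [traceIP, Pi.add_apply, K_cube_add, mul_add]
  rw [Finset.sum_add_distrib, Finset.sum_add_distrib]
  ring

private lemma traceIP_smul_left {n : ℕ} (ω : GaloisField 3 2) (c : ZMod 3)
    (x y : Fin n → GaloisField 3 2) :
    traceIP ω (c • x) y = c • traceIP ω x y := by
  simp only [traceIP, Pi.smul_apply, Algebra.smul_def, mul_pow, K_cube_alg]
  rw [show (∑ i, algebraMap (ZMod 3) (GaloisField 3 2) c * x i * y i ^ 3)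
      = algebraMap (ZMod 3) (GaloisField 3 2) c * ∑ i, x i * y i ^ 3 by
    rw [Finset.mul_sum]; exact Finset.sum_congr rfl fun i _ => by ring]
  rw [show (∑ i, algebraMap (ZMod 3) (GaloisField 3 2) c * x i ^ 3 * y i)
      = algebraMap (ZMod 3) (GaloisField 3 2) c * ∑ i, x i ^ 3 * y i by
    rw [Finset.mul_sum]; exact Finset.sum_congr rfl fun i _ => by ring]
  ring

private lemma traceIP_smul_right {n : ℕ} (ω : GaloisField 3 2) (c : ZMod 3)
    (x y : Fin n → GaloisField 3 2) :
    traceIP ω x (c • y) = c • traceIP ω x y := by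
  simp only [traceIP, Pi.smul_apply, Algebra.smul_def, mul_pow, K_cube_alg]
  rw [show (∑ i, x i * (algebraMap (ZMod 3) (GaloisField 3 2) c * y i ^ 3))
      = algebraMap (ZMod 3) (GaloisField 3 2) c * ∑ i, x i * y i ^ 3 by
    rw [Finset.mul_sum]; exact Finset.sum_congr rfl fun i _ => by ring]
  rw [show (∑ i, x i ^ 3 * (algebraMap (ZMod 3) (GaloisField 3 2) c * y i))
      = algebraMap (ZMod 3) (GaloisField 3 2) c * ∑ i, x i ^ 3 * y i by
    rw [Finset.mul_sum]; exact Finset.sum_congr rfl fun i _ => by ring]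
  ring

private lemma K_fix (x : GaloisField 3 2) (hx : x ^ 3 = x) :
    ∃ c : ZMod 3, algebraMap (ZMod 3) (GaloisField 3 2) c = x := by
  have hx0 : x * ((x - 1) * (x + 1)) = 0 := by linear_combination hx
  rcases mul_eq_zero.mp hx0 with h | h
  · exact ⟨0, by rw [map_zero, h]⟩
  · rcases mul_eq_zero.mp h with h | h
    · exact ⟨1, by rw [map_one]; exact (sub_eq_zero.mp h).symm⟩
    · exact ⟨-1, by rw [map_neg, map_one]; exact (eq_neg_of_add_eq_zero_left h).symm⟩

/-- For a symmetric matrix `Γ` over `F₃` (entries fixed by Frobenius), the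
`F₃`-span `C` of the rows of `Γ + ωI` has size `3ⁿ`, is self-orthogonal with
respect to the Hermitian trace inner product, and equals its dual; hence `C`
is self-dual. -/
theorem graph_code_selfDual {n : ℕ} (ω : GaloisField 3 2) (hω : ω ^ 2 = ω + 1)
    (Γ : Matrix (Fin n) (Fin n) (GaloisField 3 2))
    (hsym : Γ.IsSymm) (hent : ∀ i j, (Γ i j) ^ 3 = Γ i j) :
    ∀ C : Submodule (ZMod 3) (Fin n → GaloisField 3 2),
      C = Submodule.span (ZMod 3)
        (Set.range fun i => (Γ + ω • (1 : Matrix (Fin n) (Fin n) (GaloisField 3 2))) i) →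
      (∀ u ∈ C, ∀ v ∈ C, traceIP ω u v = 0) ∧
      Nat.card C = 3 ^ n ∧
      (∀ u, u ∈ C ↔ ∀ c ∈ C, traceIP ω c u = 0) := by
  classical
  intro C hC
  set g : Fin n → Fin n → GaloisField 3 2 :=
    fun i => (Γ + ω • (1 : Matrix (Fin n) (Fin n) (GaloisField 3 2))) i with hg
  have h30 : (3 : GaloisField 3 2) = 0 := by
    exact_mod_cast CharP.cast_eq_zero (GaloisField 3 2) 3
  have hω0 : ω ≠ 0 := by
    intro h; rw [h] at hω; norm_num at hω
  have hω2 : ω ^ 2 ≠ 0 := pow_ne_zero _ hω0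
  have hω3 : ω ^ 3 - ω = ω ^ 2 := by linear_combination ω * hω
  have hgik : ∀ i k, g i k = Γ i k + ω * (if i = k then 1 else 0) := by
    intro i k
    simp [hg, Matrix.add_apply, Matrix.smul_apply, Matrix.one_apply, smul_eq_mul]
  have hgcube : ∀ i k, (g i k) ^ 3 = Γ i k + ω ^ 3 * (if i = k then 1 else 0) := by
    intro i k
    rw [hgik, K_cube_add, mul_pow, hent]
    congr 1
    congr 1
    split <;> norm_num
  have hsumΓ : ∀ i j, (∑ k, Γ i k * (if j = k then (1 : GaloisField 3 2) else 0)) = Γ i j := by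
    intro i j
    rw [Finset.sum_eq_single j]
    · simp
    · intro k _ hk
      simp [Ne.symm hk]
    · intro h; exact absurd (Finset.mem_univ j) h
  have hgen : ∀ i j, traceIP ω (g i) (g j) = 0 := by
    intro i j
    have key : (∑ k, (g i k * g j k ^ 3 - g i k ^ 3 * g j k)) = 0 := by
      have step : ∀ k ∈ Finset.univ, g i k * g j k ^ 3 - g i k ^ 3 * g j k
          = (ω ^ 3 - ω) * (Γ i k * (if j = k then 1 else 0))
            - (ω ^ 3 - ω) * (Γ j k * (if i = k then 1 else 0)) := by
        intro k _
        rw [hgcube i k, hgcube j k, hgik i k, hgik j k]; ring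
      rw [Finset.sum_congr rfl step, Finset.sum_sub_distrib, ← Finset.mul_sum,
        ← Finset.mul_sum, hsumΓ, hsumΓ, hsym.apply i j]
      ring
    simp only [traceIP]
    rw [← Finset.sum_sub_distrib, key, mul_zero]
  have hmem_g : ∀ i, g i ∈ C := fun i => by
    rw [hC]; exact Submodule.subset_span ⟨i, rfl⟩
  -- self-orthogonality
  have horth1 : ∀ i, ∀ v ∈ C, traceIP ω (g i) v = 0 := by
    intro i v hv
    rw [hC] at hv
    induction hv using Submodule.span_induction with
    | mem x hx => obtain ⟨j, rfl⟩ := hx; exact hgen i j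
    | zero => norm_num [traceIP]
    | add x y hx hy ihx ihy => rw [traceIP_add_right, ihx, ihy, add_zero]
    | smul c x hx ih => rw [traceIP_smul_right, ih, smul_zero]
  have horth : ∀ u ∈ C, ∀ v ∈ C, traceIP ω u v = 0 := by
    intro u hu
    rw [hC] at hu
    induction hu using Submodule.span_induction with
    | mem x hx =>
      obtain ⟨i, rfl⟩ := hx
      exact horth1 i
    | zero => intro v hv; norm_num [traceIP]
    | add x y hx hy ihx ihy =>
      intro v hv; rw [traceIP_add_left, ihx v hv, ihy v hv, add_zero]
    | smul c x hx ih =>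
      intro v hv; rw [traceIP_smul_left, ih v hv, smul_zero]
  -- linear independence of the generators
  have hker : ∀ c : Fin n → ZMod 3, (∑ i, c i • g i) = 0 → c = 0 := by
    intro c hc
    funext k
    have h1 : (∑ i, (c i • g i) k) = 0 := by
      rw [← Finset.sum_apply k Finset.univ fun i => c i • g i, hc]; rfl
    have e1 : ∀ i ∈ Finset.univ, (c i • g i) k
        = algebraMap (ZMod 3) (GaloisField 3 2) (c i) * Γ i k
          + (if i = k then algebraMap (ZMod 3) (GaloisField 3 2) (c i) * ω else 0) := by
      intro i _
      rw [Pi.smul_apply, Algebra.smul_def, hgik]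
      rcases eq_or_ne i k with rfl | hne
      · rw [if_pos rfl, if_pos rfl]; ring
      · rw [if_neg hne, if_neg hne]; ring
    rw [Finset.sum_congr rfl e1, Finset.sum_add_distrib, Finset.sum_ite_eq'] at h1
    simp only [Finset.mem_univ, if_true] at h1
    have ha3 : (∑ i, algebraMap (ZMod 3) (GaloisField 3 2) (c i) * Γ i k) ^ 3
        = ∑ i, algebraMap (ZMod 3) (GaloisField 3 2) (c i) * Γ i k := by
      rw [sum_pow_char]
      refine Finset.sum_congr rfl fun i _ => ?_
      rw [mul_pow, K_cube_alg, hent]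
    have h3 : (∑ i, algebraMap (ZMod 3) (GaloisField 3 2) (c i) * Γ i k)
        + algebraMap (ZMod 3) (GaloisField 3 2) (c k) * ω ^ 3 = 0 := by
      have h := congrArg (fun t => t ^ 3) h1
      beta_reduce at h
      rw [K_cube_add, mul_pow, K_cube_alg, ha3] at h
      simpa using h
    have h4 : algebraMap (ZMod 3) (GaloisField 3 2) (c k) * ω ^ 2 = 0 := by
      linear_combination h3 - h1 - algebraMap (ZMod 3) (GaloisField 3 2) (c k) * hω3
    have h5 : algebraMap (ZMod 3) (GaloisField 3 2) (c k) = 0 :=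
      (mul_eq_zero.mp h4).resolve_right hω2
    show c k = (0 : ZMod 3)
    exact (algebraMap (ZMod 3) (GaloisField 3 2)).injective (by rw [map_zero]; exact h5)
  -- cardinality
  have hcard : Nat.card C = 3 ^ n := by
    have hrange : C = LinearMap.range (Fintype.linearCombination (ZMod 3) g) := by
      rw [Fintype.range_linearCombination]; exact hC
    have hinj : Function.Injective (Fintype.linearCombination (ZMod 3) g) := by
      intro c d hcd
      have h0 : Fintype.linearCombination (ZMod 3) g (c - d) = 0 := by
        rw [map_sub, hcd, sub_self]
      rw [Fintype.linearCombination_apply] at h0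
      exact sub_eq_zero.mp (hker (c - d) h0)
    rw [hrange, ← Nat.card_congr (LinearEquiv.ofInjective _ hinj).toEquiv,
      Nat.card_eq_fintype_card]
    simp [ZMod.card]
  refine ⟨horth, hcard, fun u => ⟨fun hu c hc => horth c hc u hu, fun h => ?_⟩⟩
  -- dual containment
  obtain ⟨b, hbdef⟩ : ∃ b : Fin n → GaloisField 3 2,
      b = fun k => (u k ^ 3 - u k) * (ω ^ 2)⁻¹ := ⟨_, rfl⟩
  have hb : ∀ k, ω ^ 2 * b k = u k ^ 3 - u k := by
    intro k
    simp only [hbdef]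
    field_simp [hω2]
  have hb3 : ∀ k, b k ^ 3 = b k := by
    intro k
    have e0 : ((u k) ^ 3) ^ 3 = u k := by
      rw [show ((u k) ^ 3) ^ 3 = (u k) ^ 9 from by ring, K_pow9]
    have e1 : (ω ^ 2) ^ 3 * b k ^ 3 = u k - u k ^ 3 := by
      rw [← mul_pow, hb k, K_cube_sub, e0]
    have hω6 : ω ^ 6 = -ω ^ 2 := by
      linear_combination (ω ^ 4 + ω ^ 3 + 2 * ω ^ 2 + 3 * ω + 6) * hω + (3 * ω + 2) * h30
    have e2 : (ω ^ 2) ^ 3 * b k = u k - u k ^ 3 := by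
      rw [show ((ω : GaloisField 3 2) ^ 2) ^ 3 = ω ^ 6 from by ring, hω6, neg_mul, hb k]
      ring
    exact mul_left_cancel₀ (pow_ne_zero 3 hω2) (e1.trans e2.symm)
  obtain ⟨a, hadef⟩ : ∃ a : Fin n → GaloisField 3 2,
      a = fun k => u k - ω * b k := ⟨_, rfl⟩
  have hu_ab : ∀ k, u k = a k + ω * b k := by
    intro k; simp only [hadef]; ring
  have ha3 : ∀ k, a k ^ 3 = a k := by
    intro k
    have e : a k ^ 3 = u k ^ 3 - ω ^ 3 * b k := by
      simp only [hadef]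
      rw [K_cube_sub, mul_pow, hb3]
    rw [e]
    simp only [hadef]
    linear_combination - hb k - b k * hω3
  have key : ∀ i, a i = ∑ k, Γ i k * b k := by
    intro i
    have h0 := h (g i) (hmem_g i)
    simp only [traceIP] at h0
    have h1 : (∑ k, g i k * u k ^ 3) - (∑ k, g i k ^ 3 * u k) = 0 := by
      rcases mul_eq_zero.mp h0 with hh | hh
      · exact absurd hh hω2
      · exact hh
    have E1 : (∑ k, g i k * u k ^ 3) = (∑ k, Γ i k * u k ^ 3) + ω * u i ^ 3 := by
      have e1 : ∀ k ∈ Finset.univ, g i k * u k ^ 3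
          = Γ i k * u k ^ 3 + (if i = k then ω * u k ^ 3 else 0) := by
        intro k _
        rw [hgik i k]
        rcases eq_or_ne i k with rfl | hne
        · rw [if_pos rfl, if_pos rfl]; ring
        · rw [if_neg hne, if_neg hne]; ring
      rw [Finset.sum_congr rfl e1, Finset.sum_add_distrib, Finset.sum_ite_eq]
      simp only [Finset.mem_univ, if_true]
    have E2 : (∑ k, g i k ^ 3 * u k) = (∑ k, Γ i k * u k) + ω ^ 3 * u i := by
      have e2 : ∀ k ∈ Finset.univ, g i k ^ 3 * u k
          = Γ i k * u k + (if i = k then ω ^ 3 * u k else 0) := by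
        intro k _
        rw [hgcube i k]
        rcases eq_or_ne i k with rfl | hne
        · rw [if_pos rfl, if_pos rfl]; ring
        · rw [if_neg hne, if_neg hne]; ring
      rw [Finset.sum_congr rfl e2, Finset.sum_add_distrib, Finset.sum_ite_eq]
      simp only [Finset.mem_univ, if_true]
    rw [E1, E2] at h1
    have E3 : (∑ k, Γ i k * u k ^ 3) - (∑ k, Γ i k * u k) = ω ^ 2 * ∑ k, Γ i k * b k := by
      rw [← Finset.sum_sub_distrib, Finset.mul_sum]
      refine Finset.sum_congr rfl fun k _ => ?_
      linear_combination (- Γ i k) * hb k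
    have E4 : ω * u i ^ 3 - ω ^ 3 * u i = -(ω ^ 2 * a i) := by
      have hu3 : u i ^ 3 = a i + ω ^ 3 * b i := by
        rw [hu_ab i, K_cube_add, mul_pow, ha3 i, hb3 i]
      rw [hu3, hu_ab i]
      linear_combination (-a i) * hω3
    have h2 : ω ^ 2 * (∑ k, Γ i k * b k) - ω ^ 2 * a i = 0 := by
      linear_combination h1 - E3 - E4
    exact (mul_left_cancel₀ hω2 (by linear_combination h2)).symm
  choose cfun hcfun using fun k => K_fix (b k) (hb3 k)
  have hu_eq : u = ∑ k, cfun k • g k := by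
    funext i
    rw [Finset.sum_apply]
    have e5 : ∀ k ∈ Finset.univ, (cfun k • g k) i
        = Γ k i * b k + (if k = i then ω * b k else 0) := by
      intro k _
      rw [Pi.smul_apply, Algebra.smul_def, hcfun k, hgik k i]
      rcases eq_or_ne k i with rfl | hne
      · rw [if_pos rfl, if_pos rfl]; ring
      · rw [if_neg hne, if_neg hne]; ring
    rw [Finset.sum_congr rfl e5, Finset.sum_add_distrib, Finset.sum_ite_eq']
    simp only [Finset.mem_univ, if_true]
    rw [hu_ab i, key i]
    congr 1
    refine Finset.sum_congr rfl fun k _ => ?_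
    rw [hsym.apply i k]
  rw [hC, hu_eq]
  exact Submodule.sum_mem _ fun k _ =>
    Submodule.smul_mem _ _ (Submodule.subset_span ⟨k, rfl⟩)
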